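/- If T is a reiteratively hypercyclic bounded operator on a separable infinite-dimensional Banach space X, then HC(T) = ∪_{a∈S} UFHC_a(T). -/

import Mathlib

open Filter Topology

/-- The weighted sum `∑_{j=0}^{N} a_j · 1_A(j)`. -/
noncomputable def wSum (a : ℕ → ℝ) (A : Set ℕ) (N : ℕ) : ℝ :=
  ∑ j ∈ Finset.range (N + 1), Set.indicator A a j

/-- The upper `a`-density `d̄_a(A)`. -/
noncomputable def upperDensWith (a : ℕ → ℝ) (A : Set ℕ) : ℝ :=
  Filter.limsup (fun N => wSum a A N / ∑ j ∈ Finset.range (N + 1), a j) Filter.atTop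

/-- The lower `a`-density `d_a(A)`. -/
noncomputable def lowerDensWith (a : ℕ → ℝ) (A : Set ℕ) : ℝ :=
  Filter.liminf (fun N => wSum a A N / ∑ j ∈ Finset.range (N + 1), a j) Filter.atTop

/-- The (unweighted) upper density `d̄(A)`. -/
noncomputable def upperDens (A : Set ℕ) : ℝ :=
  Filter.limsup
    (fun N : ℕ => (∑ j ∈ Finset.range (N + 1), Set.indicator A (fun _ => (1 : ℝ)) j) / (N + 1))
    Filter.atTop

/-- The upper Banach density `B̄d(A) = lim_N b_N / N`, `b_N = limsup_k #(A ∩ [k+1, k+N])`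
(the limit exists, so it coincides with the limsup used here). -/
noncomputable def upperBanachDens (A : Set ℕ) : ℝ :=
  Filter.limsup
    (fun N : ℕ =>
      (Filter.limsup
          (fun k : ℕ => ∑ j ∈ Finset.Icc (k + 1) (k + N), Set.indicator A (fun _ => (1 : ℝ)) j)
          Filter.atTop) / (N : ℝ))
    Filter.atTop

/-- `v_n(a) = a_n / ∑_{j=0}^{n-1} a_j`. -/
noncomputable def vSeq (a : ℕ → ℝ) (n : ℕ) : ℝ := a n / ∑ j ∈ Finset.range n, a j

/-- The class `S` of weights: positive non-decreasing sequences tending to `+∞` such that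
`(v_n(a))_{n ≥ 1}` is non-increasing and tends to `0`. -/
def memS (a : ℕ → ℝ) : Prop :=
  (∀ n, 0 < a n) ∧ Monotone a ∧ Filter.Tendsto a Filter.atTop Filter.atTop ∧
    (∀ m n : ℕ, 1 ≤ m → m ≤ n → vSeq a n ≤ vSeq a m) ∧
    Filter.Tendsto (vSeq a) Filter.atTop (nhds 0)

/-- `A - k = {n : n + k ∈ A}`. -/
def shiftSet (A : Set ℕ) (k : ℕ) : Set ℕ := {n : ℕ | n + k ∈ A}

/-- A set of natural numbers has bounded gaps (is syndetic). -/
def Syndetic (K : Set ℕ) : Prop := ∃ m : ℕ, ∀ n : ℕ, (K ∩ Set.Icc n (n + m)).Nonempty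

/-- The return set `N(x, U) = {n : T^n x ∈ U}`. -/
def retSet {X : Type*} [NormedAddCommGroup X] [NormedSpace ℂ X] (T : X →L[ℂ] X) (x : X)
    (U : Set X) : Set ℕ :=
  {n : ℕ | (T ^ n) x ∈ U}

/-- The set of hypercyclic vectors of `T`. -/
def HCSet {X : Type*} [NormedAddCommGroup X] [NormedSpace ℂ X] (T : X →L[ℂ] X) : Set X :=
  {x : X | Dense (Set.range fun n : ℕ => (T ^ n) x)}

/-- The set of `U`-frequently hypercyclic vectors of `T`. -/
def UFHCSet {X : Type*} [NormedAddCommGroup X] [NormedSpace ℂ X] (T : X →L[ℂ] X) : Set X :=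
  {x : X | ∀ U : Set X, IsOpen U → U.Nonempty → 0 < upperDens (retSet T x U)}

/-- The set of `U`-frequently hypercyclic vectors of `T` with respect to the weight `a`. -/
def UFHCaSet {X : Type*} [NormedAddCommGroup X] [NormedSpace ℂ X] (a : ℕ → ℝ)
    (T : X →L[ℂ] X) : Set X :=
  {x : X | ∀ U : Set X, IsOpen U → U.Nonempty → 0 < upperDensWith a (retSet T x U)}

/-- The set of reiteratively hypercyclic vectors of `T`. -/
def RHCSet {X : Type*} [NormedAddCommGroup X] [NormedSpace ℂ X] (T : X →L[ℂ] X) : Set X :=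
  {x : X | ∀ U : Set X, IsOpen U → U.Nonempty → 0 < upperBanachDens (retSet T x U)}

/-- `T` is `𝒜`-hypercyclic. -/
def AHC {X : Type*} [NormedAddCommGroup X] [NormedSpace ℂ X] (𝒜 : Set (Set ℕ))
    (T : X →L[ℂ] X) : Prop :=
  ∃ x : X, ∀ U : Set X, IsOpen U → U.Nonempty → retSet T x U ∈ 𝒜

/-- The `n`-fold product `T × ⋯ × T` acting diagonally on `Fin n → X`. -/
noncomputable def nfold {X : Type*} [NormedAddCommGroup X] [NormedSpace ℂ X] (T : X →L[ℂ] X)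
    (n : ℕ) : (Fin n → X) →L[ℂ] (Fin n → X) :=
  ContinuousLinearMap.pi fun i => T.comp (ContinuousLinearMap.proj i)

/-!
A hypercyclic vector `x` enters every non-empty open set infinitely often. If `y` is
reiteratively hypercyclic, then `N(y, U)` meets windows `[k + 1, k + N]`, for arbitrarily large
`N`, in at least `δ N` points; the hits `j` of such a window describe the open set
`W = ⋂ T⁻ʲ U ∋ T^k y`, and every visit of `x` to `W` yields an equally dense window of `N(x, U)`.

Taking such windows for all sets `u_i` of a countable basis, infinitely often each and with
lengths `N → ∞`, one builds `a ∈ S` through `v_n(a) = 1 / t_n`, where `t` rises with slope at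
most one and equals `N` on each chosen window `[k + 1, k + N]`. On the window `a ≥ A_k / N`, where
`A_k = ∑_{j ≤ k} a_j`, while `A_{k+N} = A_k (1 + 1/N)^N ≤ 3 A_k`; so the window carries a fraction
`δ / 3` of the total weight up to `k + N`, and `d̄_a(N(x, u_i)) ≥ δ / 3`. Across each window `a`
grows by the factor `(1 + 1/N)^(N-1) ≥ 3/2`, which gives `a → ∞`.
-/

/-- The weight `a` with `a_0 = 1` and `v_n(a) = 1 / t_n` for `n ≥ 1`; `ratioWeightSum t n` is
`∑_{j ≤ n} a_j`. -/
noncomputable def ratioWeightSum (t : ℕ → ℕ) : ℕ → ℝ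
  | 0 => 1
  | n + 1 => ratioWeightSum t n * (1 + (t (n + 1) : ℝ)⁻¹)

noncomputable def ratioWeight (t : ℕ → ℕ) : ℕ → ℝ
  | 0 => 1
  | n + 1 => ratioWeightSum t n / t (n + 1)

section RatioWeight

variable {t : ℕ → ℕ}

lemma ratioWeightSum_pos (t : ℕ → ℕ) (n : ℕ) : 0 < ratioWeightSum t n := by
  induction n with
  | zero => simp [ratioWeightSum]
  | succ n ih => rw [ratioWeightSum]; positivity

lemma sum_range_ratioWeight (t : ℕ → ℕ) (n : ℕ) :
    ∑ j ∈ Finset.range (n + 1), ratioWeight t j = ratioWeightSum t n := by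
  induction n with
  | zero => simp [ratioWeight, ratioWeightSum]
  | succ n ih =>
    rw [Finset.sum_range_succ, ih, ratioWeight, ratioWeightSum]
    ring

lemma ratioWeight_nonneg (t : ℕ → ℕ) (n : ℕ) : 0 ≤ ratioWeight t n := by
  cases n with
  | zero => simp [ratioWeight]
  | succ n => exact div_nonneg (ratioWeightSum_pos t n).le (Nat.cast_nonneg _)

lemma ratioWeight_pos (ht : ∀ n, 0 < t n) (n : ℕ) : 0 < ratioWeight t n := by
  cases n with
  | zero => simp [ratioWeight]
  | succ n => exact div_pos (ratioWeightSum_pos t n) (by exact_mod_cast ht (n + 1))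

lemma vSeq_ratioWeight_succ (t : ℕ → ℕ) (n : ℕ) :
    vSeq (ratioWeight t) (n + 1) = (t (n + 1) : ℝ)⁻¹ := by
  rw [vSeq, sum_range_ratioWeight, ratioWeight, div_div_cancel_left' (ratioWeightSum_pos t n).ne']

lemma ratioWeight_monotone (ht : ∀ n, 0 < t n) (ht₁ : t 1 = 1)
    (hstep : ∀ n, t (n + 1) ≤ t n + 1) : Monotone (ratioWeight t) := by
  refine monotone_nat_of_le_succ fun n => ?_
  cases n with
  | zero => simp [ratioWeight, ratioWeightSum, ht₁]
  | succ n =>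
    have ht₁ : (0 : ℝ) < t (n + 1) := by exact_mod_cast ht (n + 1)
    have ht₂ : (0 : ℝ) < t (n + 2) := by exact_mod_cast ht (n + 2)
    have hstep' : (t (n + 2) : ℝ) ≤ t (n + 1) + 1 := by exact_mod_cast hstep (n + 1)
    have hS := ratioWeightSum_pos t n
    simp only [ratioWeight, ratioWeightSum]
    rw [div_le_div_iff₀ ht₁ ht₂, mul_assoc, add_mul, inv_mul_cancel₀ ht₁.ne', one_mul]
    gcongr

lemma memS_ratioWeight (ht : ∀ n, 0 < t n) (ht₁ : t 1 = 1) (hmono : Monotone t)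
    (hstep : ∀ n, t (n + 1) ≤ t n + 1) (htop : Tendsto t atTop atTop)
    (hgrowth : Tendsto (ratioWeight t) atTop atTop) : memS (ratioWeight t) := by
  refine ⟨ratioWeight_pos ht, ratioWeight_monotone ht ht₁ hstep, hgrowth, ?_, ?_⟩
  · intro m n hm hmn
    obtain ⟨m, rfl⟩ := Nat.exists_eq_add_of_le' hm
    obtain ⟨n, rfl⟩ := Nat.exists_eq_add_of_le' (hm.trans hmn)
    rw [vSeq_ratioWeight_succ, vSeq_ratioWeight_succ]
    exact inv_anti₀ (by exact_mod_cast ht _) (by exact_mod_cast hmono hmn)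
  · rw [← tendsto_add_atTop_iff_nat 1]
    simp_rw [vSeq_ratioWeight_succ]
    exact (tendsto_natCast_atTop_atTop.comp (htop.comp (tendsto_add_atTop_nat 1))).inv_tendsto_atTop

section Window

variable {k N : ℕ}

lemma ratioWeightSum_add_of_window (hwin : ∀ n ∈ Set.Ioc k (k + N), t n = N) {m : ℕ} (hm : m ≤ N) :
    ratioWeightSum t (k + m) = ratioWeightSum t k * (1 + (N : ℝ)⁻¹) ^ m := by
  induction m with
  | zero => simp
  | succ m ih =>
    rw [← add_assoc, ratioWeightSum, ih (by omega), hwin _ ⟨by omega, by omega⟩, pow_succ,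
      mul_assoc]

lemma ratioWeight_add_of_window (hwin : ∀ n ∈ Set.Ioc k (k + N), t n = N) {m : ℕ} (hm : m < N) :
    ratioWeight t (k + m + 1) = ratioWeightSum t k * (1 + (N : ℝ)⁻¹) ^ m / N := by
  rw [ratioWeight, ratioWeightSum_add_of_window hwin hm.le, hwin _ ⟨by omega, by omega⟩]

lemma ratioWeightSum_div_le_ratioWeight_of_window (hwin : ∀ n ∈ Set.Ioc k (k + N), t n = N)
    {n : ℕ} (hn₁ : k < n) (hn₂ : n ≤ k + N) :
    ratioWeightSum t k / N ≤ ratioWeight t n := by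
  obtain ⟨m, rfl⟩ : ∃ m, n = k + m + 1 := ⟨n - k - 1, by omega⟩
  rw [ratioWeight_add_of_window hwin (by omega), mul_div_right_comm]
  exact le_mul_of_one_le_right (by have := ratioWeightSum_pos t k; positivity)
    (one_le_pow₀ (le_add_of_nonneg_right (by positivity)))

lemma three_halves_mul_ratioWeight_le_of_window (hwin : ∀ n ∈ Set.Ioc k (k + N), t n = N)
    (hN : 2 ≤ N) :
    3 / 2 * ratioWeight t (k + 1) ≤ ratioWeight t (k + N) := by
  have hN' : (2 : ℝ) ≤ N := by exact_mod_cast hN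
  have hbernoulli : (3 / 2 : ℝ) ≤ (1 + (N : ℝ)⁻¹) ^ (N - 1) := by
    have hinv : (0 : ℝ) ≤ (N : ℝ)⁻¹ := by positivity
    refine le_trans ?_ (one_add_mul_le_pow (by linarith) _)
    rw [Nat.cast_sub (by omega), sub_mul, mul_inv_cancel₀ (by positivity)]
    linarith [inv_anti₀ (by norm_num) hN']
  have h₁ := ratioWeight_add_of_window hwin (m := 0) (by omega)
  have h₂ := ratioWeight_add_of_window hwin (m := N - 1) (by omega)
  rw [show k + (N - 1) + 1 = k + N by omega] at h₂
  rw [add_zero, pow_zero, mul_one] at h₁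
  rw [h₁, h₂, mul_div_right_comm, mul_comm]
  exact mul_le_mul_of_nonneg_left hbernoulli
    (div_nonneg (ratioWeightSum_pos t k).le (by positivity))

end Window

end RatioWeight

noncomputable def windowCount (A : Set ℕ) (k N : ℕ) : ℝ :=
  ∑ j ∈ Finset.Icc (k + 1) (k + N), Set.indicator A (fun _ => (1 : ℝ)) j

lemma windowCount_nonneg (A : Set ℕ) (k N : ℕ) : 0 ≤ windowCount A k N :=
  Finset.sum_nonneg fun _ _ => Set.indicator_nonneg (fun _ _ => zero_le_one) _

lemma windowCount_le (A : Set ℕ) (k N : ℕ) : windowCount A k N ≤ N := by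
  calc windowCount A k N ≤ ∑ _j ∈ Finset.Icc (k + 1) (k + N), (1 : ℝ) :=
        Finset.sum_le_sum fun _ _ => Set.indicator_le_self' (fun _ _ => zero_le_one) _
    _ = N := by simp

lemma windowCount_eq_sum_Icc (A : Set ℕ) (k N : ℕ) :
    windowCount A k N = ∑ j ∈ Finset.Icc 1 N, Set.indicator A (fun _ => (1 : ℝ)) (k + j) := by
  rw [windowCount, ← Finset.map_add_left_Icc, Finset.sum_map]
  rfl

lemma windowCount_le_windowCount {A B : Set ℕ} {k m N : ℕ}
    (h : ∀ j ∈ Finset.Icc 1 N, k + j ∈ A → m + j ∈ B) : windowCount A k N ≤ windowCount B m N := by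
  rw [windowCount_eq_sum_Icc, windowCount_eq_sum_Icc]
  refine Finset.sum_le_sum fun j hj => ?_
  by_cases hA : k + j ∈ A
  · simp [Set.indicator_of_mem hA, Set.indicator_of_mem (h j hj hA)]
  · simp [Set.indicator_of_notMem hA, Set.indicator_nonneg]

def HasDenseWindows (δ : ℝ) (A : Set ℕ) : Prop :=
  ∃ᶠ N in atTop, ∃ᶠ k in atTop, δ * N ≤ windowCount A k N

lemma exists_hasDenseWindows_of_upperBanachDens_pos {A : Set ℕ} (h : 0 < upperBanachDens A) :
    ∃ δ, 0 < δ ∧ HasDenseWindows δ A := by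
  have hlimsup_nonneg : ∀ N : ℕ, 0 ≤ limsup (windowCount A · N) atTop := fun N =>
    le_limsup_of_frequently_le (Frequently.of_forall fun k => windowCount_nonneg A k N)
      (isBoundedUnder_of ⟨N, fun k => windowCount_le A k N⟩)
  refine ⟨upperBanachDens A / 2, half_pos h, ?_⟩
  have hfreq : ∃ᶠ N : ℕ in atTop, upperBanachDens A / 2 < limsup (windowCount A · N) atTop / N :=
    frequently_lt_of_lt_limsup
      (isCoboundedUnder_le_of_le atTop fun N => div_nonneg (hlimsup_nonneg N) N.cast_nonneg)
      (half_lt_self h)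
  refine hfreq.mono fun N hN => ?_
  have hN₀ : (0 : ℝ) < N := by
    rcases N.eq_zero_or_pos with rfl | hN₀
    · simp only [Nat.cast_zero, div_zero] at hN; linarith
    · exact_mod_cast hN₀
  rw [lt_div_iff₀ hN₀] at hN
  exact (frequently_lt_of_lt_limsup
    (isCoboundedUnder_le_of_le atTop fun k => windowCount_nonneg A k N) hN).mono fun _ => le_of_lt

section UpperDensWith

variable {a : ℕ → ℝ}

lemma wSum_nonneg (ha : ∀ n, 0 ≤ a n) (A : Set ℕ) (N : ℕ) : 0 ≤ wSum a A N :=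
  Finset.sum_nonneg fun j _ => Set.indicator_nonneg (fun j _ => ha j) j

lemma wSum_mono (ha : ∀ n, 0 ≤ a n) {A B : Set ℕ} (h : A ⊆ B) (N : ℕ) :
    wSum a A N ≤ wSum a B N :=
  Finset.sum_le_sum fun j _ => Set.indicator_le_indicator_of_subset h ha j

lemma wSum_div_sum_le_one (ha : ∀ n, 0 ≤ a n) (A : Set ℕ) (N : ℕ) :
    wSum a A N / ∑ j ∈ Finset.range (N + 1), a j ≤ 1 :=
  div_le_one_of_le₀ (by simpa [wSum] using wSum_mono ha (Set.subset_univ A) N)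
    (Finset.sum_nonneg fun j _ => ha j)

lemma upperDensWith_mono (ha : ∀ n, 0 ≤ a n) {A B : Set ℕ} (h : A ⊆ B) :
    upperDensWith a A ≤ upperDensWith a B :=
  limsup_le_limsup
    (Eventually.of_forall fun N =>
      div_le_div_of_nonneg_right (wSum_mono ha h N) (Finset.sum_nonneg fun j _ => ha j))
    (isCoboundedUnder_le_of_le atTop fun N =>
      div_nonneg (wSum_nonneg ha A N) (Finset.sum_nonneg fun j _ => ha j))
    (isBoundedUnder_of ⟨1, wSum_div_sum_le_one ha B⟩)

lemma upperDensWith_pos_of_frequently (ha : ∀ n, 0 ≤ a n) {A : Set ℕ} {c : ℝ} (hc : 0 < c)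
    (h : ∃ᶠ N in atTop, c ≤ wSum a A N / ∑ j ∈ Finset.range (N + 1), a j) :
    0 < upperDensWith a A :=
  hc.trans_le (le_limsup_of_frequently_le h (isBoundedUnder_of ⟨1, wSum_div_sum_le_one ha A⟩))

lemma upperDensWith_empty (a : ℕ → ℝ) : upperDensWith a ∅ = 0 := by
  simp [upperDensWith, wSum]

end UpperDensWith

lemma one_add_inv_pow_le_three (N : ℕ) : (1 + (N : ℝ)⁻¹) ^ N ≤ 3 :=
  Real.one_add_inv_pow_le_exp.trans (Real.exp_one_lt_d9.le.trans (by norm_num))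

lemma le_wSum_div_of_window {t : ℕ → ℕ} {k N : ℕ} (hwin : ∀ n ∈ Set.Ioc k (k + N), t n = N)
    (hN : 0 < N) {A : Set ℕ} {δ : ℝ} (hδ : 0 ≤ δ) (hA : δ * N ≤ windowCount A k N) :
    δ / 3 ≤ wSum (ratioWeight t) A (k + N) /
      ∑ j ∈ Finset.range (k + N + 1), ratioWeight t j := by
  have hN' : (0 : ℝ) < N := by exact_mod_cast hN
  rw [sum_range_ratioWeight, le_div_iff₀ (ratioWeightSum_pos t _)]
  calc δ / 3 * ratioWeightSum t (k + N) ≤ δ / 3 * (3 * ratioWeightSum t k) := by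
        rw [ratioWeightSum_add_of_window hwin le_rfl, mul_comm 3]
        gcongr
        · exact (ratioWeightSum_pos t k).le
        · exact one_add_inv_pow_le_three N
    _ = ratioWeightSum t k / N * (δ * N) := by field_simp
    _ ≤ ratioWeightSum t k / N * windowCount A k N := by
        gcongr
        exact div_nonneg (ratioWeightSum_pos t k).le hN'.le
    _ = ∑ n ∈ Finset.Icc (k + 1) (k + N), Set.indicator A (fun _ => ratioWeightSum t k / N) n := by
        rw [windowCount, Finset.mul_sum]
        refine Finset.sum_congr rfl fun n _ => ?_
        by_cases hn : n ∈ A <;> simp [hn]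
    _ ≤ ∑ n ∈ Finset.Icc (k + 1) (k + N), Set.indicator A (ratioWeight t) n := by
        refine Finset.sum_le_sum fun n hn => Set.indicator_le_indicator ?_
        rw [Finset.mem_Icc] at hn
        exact ratioWeightSum_div_le_ratioWeight_of_window hwin (by omega) hn.2
    _ ≤ wSum (ratioWeight t) A (k + N) := by
        refine Finset.sum_le_sum_of_subset_of_nonneg (fun n hn => ?_) fun n _ _ =>
          Set.indicator_nonneg (fun n _ => ratioWeight_nonneg t n) n
        simp only [Finset.mem_Icc, Finset.mem_range] at hn ⊢
        omega

/-- The `j`-th window is `[k j + 1, k j + N j]`; the gaps leave room for a slope-one ramp between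
consecutive plateaus. -/
structure SpacedWindows (k N : ℕ → ℕ) : Prop where
  monotone : Monotone N
  two_add_le : ∀ j, j + 2 ≤ N j
  le_first : N 0 ≤ k 0
  gap : ∀ j, k j + N j + N (j + 1) ≤ k (j + 1)

/-- The term `N j - (k j + 1 - n)` (truncated subtraction) is a ramp of slope one reaching the
plateau `N j` at `n = k j + 1`. -/
def rampProfile (k N : ℕ → ℕ) (n : ℕ) : ℕ :=
  max 1 ((Finset.range (n + 1)).sup fun j => N j - (k j + 1 - n))

lemma one_le_rampProfile (k N : ℕ → ℕ) (n : ℕ) : 1 ≤ rampProfile k N n := le_max_left _ _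

lemma rampProfile_monotone {k N : ℕ → ℕ} : Monotone (rampProfile k N) := fun n m hnm =>
  max_le_max le_rfl (Finset.sup_le fun j hj => Finset.le_sup_of_le
    (Finset.range_subset_range.2 (by omega) hj) (by omega))

namespace SpacedWindows

variable {k N : ℕ → ℕ}

lemma le_start (hw : SpacedWindows k N) (j : ℕ) : N j + j ≤ k j := by
  induction j with
  | zero => exact hw.le_first
  | succ j ih => have := hw.gap j; have := hw.two_add_le j; omega

lemma start_add_le_of_lt (hw : SpacedWindows k N) {i j : ℕ} (hij : i < j) :
    k i + N i + N j ≤ k j := by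
  induction j, hij using Nat.le_induction with
  | base => exact hw.gap i
  | succ j _ ih => have := hw.gap j; omega

lemma rampProfile_eq_sup (hw : SpacedWindows k N) {n M : ℕ} (hM : n < M) :
    rampProfile k N n = max 1 ((Finset.range M).sup fun j => N j - (k j + 1 - n)) := by
  refine congrArg (max 1) (le_antisymm (Finset.sup_mono (by simpa using hM)) ?_)
  refine Finset.sup_le fun j _ => ?_
  by_cases hjn : j ≤ n
  · exact Finset.le_sup (f := fun j => N j - (k j + 1 - n)) (by simpa [Nat.lt_succ_iff] using hjn)
  · have := hw.le_start j
    simp only [show N j - (k j + 1 - n) = 0 by omega, zero_le]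

lemma rampProfile_succ_le (hw : SpacedWindows k N) (n : ℕ) :
    rampProfile k N (n + 1) ≤ rampProfile k N n + 1 := by
  rw [hw.rampProfile_eq_sup (lt_add_one (n + 1)), hw.rampProfile_eq_sup (by omega : n < n + 1 + 1)]
  refine max_le (by omega) (Finset.sup_le fun j hj => ?_)
  have : N j - (k j + 1 - n) ≤ _ := Finset.le_sup (f := fun j => N j - (k j + 1 - n)) hj
  omega

lemma rampProfile_one (hw : SpacedWindows k N) : rampProfile k N 1 = 1 :=
  max_eq_left (Finset.sup_le fun j _ => by have := hw.le_start j; omega)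

lemma rampProfile_of_mem_window (hw : SpacedWindows k N) {j n : ℕ}
    (hn : n ∈ Set.Ioc (k j) (k j + N j)) : rampProfile k N n = N j := by
  obtain ⟨hn₁, hn₂⟩ := hn
  have hjn : j < n + 1 := by have := hw.le_start j; omega
  refine le_antisymm (max_le (by have := hw.two_add_le j; omega) (Finset.sup_le fun i _ => ?_))
    (le_max_of_le_right (Finset.le_sup_of_le (Finset.mem_range.2 hjn) (by omega)))
  rcases le_or_gt i j with hij | hij
  · exact (Nat.sub_le _ _).trans (hw.monotone hij)
  · have := hw.start_add_le_of_lt hij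
    omega

lemma tendsto_rampProfile (hw : SpacedWindows k N) : Tendsto (rampProfile k N) atTop atTop :=
  tendsto_atTop_atTop_of_monotone rampProfile_monotone fun b =>
    have := hw.two_add_le b
    ⟨k b + 1, by rw [hw.rampProfile_of_mem_window (j := b) ⟨by omega, by omega⟩]; omega⟩

end SpacedWindows

lemma exists_spacedWindows (P : ℕ → ℕ → ℕ → Prop)
    (hP : ∀ i, ∃ᶠ N in atTop, ∃ᶠ k in atTop, P i k N) :
    ∃ k N : ℕ → ℕ, SpacedWindows k N ∧ ∀ i, ∃ᶠ j in atTop, P i (k j) (N j) := by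
  have hnext : ∀ (j : ℕ) (w : ℕ × ℕ), ∃ w' : ℕ × ℕ,
      max w.2 (j + 2) ≤ w'.2 ∧ w.1 + w.2 + w'.2 ≤ w'.1 ∧ P (Nat.unpair j).1 w'.1 w'.2 := by
    intro j w
    obtain ⟨N, hN, hk⟩ := (frequently_atTop.1 (hP (Nat.unpair j).1)) (max w.2 (j + 2))
    obtain ⟨k, hk, hP⟩ := frequently_atTop.1 hk (w.1 + w.2 + N)
    exact ⟨(k, N), hN, hk, hP⟩
  choose next hnext using hnext
  -- `w (j + 1)` is the `j`-th window; `w 0 = (0, 0)` is a dummy predecessor of the first one.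
  let w : ℕ → ℕ × ℕ := fun j => Nat.rec (0, 0) next j
  have hw : ∀ j, w (j + 1) = next j (w j) := fun j => rfl
  refine ⟨fun j => (w (j + 1)).1, fun j => (w (j + 1)).2, ⟨?_, ?_, ?_, ?_⟩, fun i => ?_⟩
  · exact monotone_nat_of_le_succ fun j =>
      (le_max_left _ _).trans ((hw (j + 1)).symm ▸ (hnext _ _).1)
  · exact fun j => (le_max_right _ _).trans (hnext j (w j)).1
  · simpa [w] using (hnext 0 (w 0)).2.1
  · intro j
    have := (hnext (j + 1) (w (j + 1))).2.1
    rwa [← hw] at this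
  · refine frequently_atTop.2 fun J => ⟨Nat.pair i J, Nat.right_le_pair i J, ?_⟩
    simpa [hw] using (hnext (Nat.pair i J) (w (Nat.pair i J))).2.2

lemma tendsto_atTop_of_monotone_of_exists_mul_le {f : ℕ → ℝ} {c : ℝ} (hc : 1 < c)
    (hf : Monotone f) (hf₀ : 0 < f 0) (h : ∀ n, ∃ m, c * f n ≤ f m) :
    Tendsto f atTop atTop := by
  have hpow : ∀ i : ℕ, ∃ m, c ^ i * f 0 ≤ f m := by
    intro i
    induction i with
    | zero => exact ⟨0, by simp⟩
    | succ i ih =>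
      obtain ⟨m, hm⟩ := ih
      obtain ⟨m', hm'⟩ := h m
      exact ⟨m', by rw [pow_succ, mul_comm _ c, mul_assoc]; nlinarith⟩
  refine tendsto_atTop_atTop_of_monotone hf fun b => ?_
  obtain ⟨i, hi⟩ := pow_unbounded_of_one_lt (b / f 0) hc
  obtain ⟨m, hm⟩ := hpow i
  exact ⟨m, le_trans (by rw [div_lt_iff₀ hf₀] at hi; exact hi.le) hm⟩

theorem exists_memS_forall_upperDensWith_pos (A : ℕ → Set ℕ)
    (hA : ∀ i, ∃ δ, 0 < δ ∧ HasDenseWindows δ (A i)) :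
    ∃ a, memS a ∧ ∀ i, 0 < upperDensWith a (A i) := by
  choose δ hδ hdense using hA
  obtain ⟨k, N, hw, hfreq⟩ :=
    exists_spacedWindows (fun i k N => δ i * N ≤ windowCount (A i) k N) hdense
  set t := rampProfile k N
  have ht : ∀ n, 0 < t n := one_le_rampProfile k N
  have hwin : ∀ j, ∀ n ∈ Set.Ioc (k j) (k j + N j), t n = N j := fun j n =>
    hw.rampProfile_of_mem_window
  have hgrowth : Tendsto (ratioWeight t) atTop atTop := by
    refine tendsto_atTop_of_monotone_of_exists_mul_le (by norm_num : (1 : ℝ) < 3 / 2)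
      (ratioWeight_monotone ht hw.rampProfile_one hw.rampProfile_succ_le) (ratioWeight_pos ht 0)
      fun n => ⟨k n + N n, ?_⟩
    have hn : n ≤ k n + 1 := by have := hw.le_start n; omega
    calc 3 / 2 * ratioWeight t n ≤ 3 / 2 * ratioWeight t (k n + 1) := by
          gcongr
          exact ratioWeight_monotone ht hw.rampProfile_one hw.rampProfile_succ_le hn
      _ ≤ ratioWeight t (k n + N n) :=
          three_halves_mul_ratioWeight_le_of_window (hwin n) (by have := hw.two_add_le n; omega)
  refine ⟨ratioWeight t, memS_ratioWeight ht hw.rampProfile_one rampProfile_monotone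
    hw.rampProfile_succ_le hw.tendsto_rampProfile hgrowth, fun i => ?_⟩
  have hend : Tendsto (fun j => k j + N j) atTop atTop :=
    tendsto_atTop_mono (fun j => show j ≤ k j + N j by have := hw.le_start j; omega) tendsto_id
  refine upperDensWith_pos_of_frequently (ratioWeight_nonneg t) (div_pos (hδ i) three_pos)
    (hend.frequently ((hfreq i).mono fun j hj => ?_))
  exact le_wSum_div_of_window (hwin j) (by have := hw.two_add_le j; omega) (hδ i).le hj

section Dynamics

variable {X : Type*} [NormedAddCommGroup X] [NormedSpace ℂ X] {T : X →L[ℂ] X}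

lemma pow_add_apply (T : X →L[ℂ] X) (x : X) (m j : ℕ) :
    (T ^ (m + j)) x = (T ^ j) ((T ^ m) x) := by
  rw [add_comm, pow_add]
  rfl

lemma frequently_mem_retSet {x : X} (hx : x ∈ HCSet T) {W : Set X} (hW : IsOpen W)
    (hWne : W.Nonempty) : ∃ᶠ n in atTop, n ∈ retSet T x W := by
  rcases subsingleton_or_nontrivial X with _ | _
  · obtain ⟨z, hz⟩ := hWne
    exact Frequently.of_forall fun n => show (T ^ n) x ∈ W from Subsingleton.elim z ((T ^ n) x) ▸ hz
  · refine frequently_atTop.2 fun M => ?_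
    have hdense := hx.sdiff_finite ((Set.finite_Iio M).image fun n => (T ^ n) x)
    obtain ⟨_, ⟨⟨n, rfl⟩, hnM⟩, hnW⟩ := hdense.exists_mem_open hW hWne
    exact ⟨n, not_lt.1 fun h => hnM ⟨n, h, rfl⟩, hnW⟩

lemma HasDenseWindows.retSet_of_mem_HCSet {δ : ℝ} {x y : X} {U : Set X} (hU : IsOpen U)
    (hx : x ∈ HCSet T) (hy : HasDenseWindows δ (retSet T y U)) :
    HasDenseWindows δ (retSet T x U) := by
  classical
  refine hy.mono fun N hN => ?_
  obtain ⟨k, hk⟩ := hN.exists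
  set J := (Finset.Icc 1 N).filter fun j => k + j ∈ retSet T y U
  have hW : IsOpen (⋂ j ∈ J, (T ^ j) ⁻¹' U) :=
    isOpen_biInter_finset fun j _ => hU.preimage (T ^ j).continuous
  have hyW : (T ^ k) y ∈ ⋂ j ∈ J, (T ^ j) ⁻¹' U := Set.mem_iInter₂.2 fun j hj => by
    rw [Set.mem_preimage, ← pow_add_apply]
    exact (Finset.mem_filter.1 hj).2
  refine (frequently_mem_retSet hx hW ⟨_, hyW⟩).mono fun m hm =>
    hk.trans (windowCount_le_windowCount fun j hj hkj => ?_)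
  have := Set.mem_iInter₂.1 hm j (Finset.mem_filter.2 ⟨hj, hkj⟩)
  rwa [Set.mem_preimage, ← pow_add_apply] at this

lemma UFHCaSet_subset_HCSet (a : ℕ → ℝ) (T : X →L[ℂ] X) : UFHCaSet a T ⊆ HCSet T := by
  intro x hx
  refine dense_iff_inter_open.2 fun U hU hUne => ?_
  obtain ⟨n, hn⟩ : (retSet T x U).Nonempty := Set.nonempty_iff_ne_empty.2 fun h => by
    simpa [h, upperDensWith_empty] using hx U hU hUne
  exact ⟨_, hn, n, rfl⟩

end Dynamics

lemma exists_seq_nonempty_isTopologicalBasis (X : Type*) [TopologicalSpace X]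
    [SecondCountableTopology X] [Nonempty X] :
    ∃ b : ℕ → Set X, (∀ i, (b i).Nonempty) ∧ TopologicalSpace.IsTopologicalBasis (Set.range b) := by
  obtain ⟨B, hBc, hB₀, hB⟩ := TopologicalSpace.exists_countable_basis X
  obtain ⟨v, hv, -⟩ :=
    hB.exists_subset_of_mem_open (Set.mem_univ (Classical.arbitrary X)) isOpen_univ
  obtain ⟨b, rfl⟩ := hBc.exists_eq_range ⟨v, hv⟩
  exact ⟨b, fun i => Set.nonempty_iff_ne_empty.2 fun h => hB₀ (h ▸ Set.mem_range_self i), hB⟩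

theorem stmt_6_general {X : Type*} [NormedAddCommGroup X] [NormedSpace ℂ X] (T : X →L[ℂ] X)
    (hT : (RHCSet T).Nonempty) :
    HCSet T = ⋃ a ∈ {a : ℕ → ℝ | memS a}, UFHCaSet a T := by
  refine subset_antisymm (fun x hx => ?_) (Set.iUnion₂_subset fun a _ => UFHCaSet_subset_HCSet a T)
  obtain ⟨y, hy⟩ := hT
  have : Nonempty X := ⟨x⟩
  have : TopologicalSpace.SeparableSpace X := ⟨⟨_, Set.countable_range _, hx⟩⟩
  obtain ⟨b, hb_ne, hb⟩ := exists_seq_nonempty_isTopologicalBasis X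
  obtain ⟨a, ha, hpos⟩ := exists_memS_forall_upperDensWith_pos (fun i => retSet T x (b i))
    fun i => (exists_hasDenseWindows_of_upperBanachDens_pos
      (hy _ (hb.isOpen (Set.mem_range_self i)) (hb_ne i))).imp fun _ hδ =>
        ⟨hδ.1, hδ.2.retSet_of_mem_HCSet (hb.isOpen (Set.mem_range_self i)) hx⟩
  refine Set.mem_iUnion₂.2 ⟨a, ha, fun U hU ⟨z, hz⟩ => ?_⟩
  obtain ⟨_, ⟨i, rfl⟩, -, hiU⟩ := hb.exists_subset_of_mem_open hz hU
  exact (hpos i).trans_le (upperDensWith_mono (fun n => (ha.1 n).le) fun n hn => hiU hn)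

/-- If `T` is reiteratively hypercyclic then `HC(T) = ⋃_{a ∈ S} UFHC_a(T)`. -/
theorem stmt_6 {X : Type*} [NormedAddCommGroup X] [NormedSpace ℂ X] [CompleteSpace X]
    [TopologicalSpace.SeparableSpace X] (hX : ¬FiniteDimensional ℂ X) (T : X →L[ℂ] X)
    (hT : (RHCSet T).Nonempty) :
    HCSet T = ⋃ a ∈ {a : ℕ → ℝ | memS a}, UFHCaSet a T :=
  stmt_6_general T hT
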